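/- arXiv:2410.18863 — 3 statements merged into one kernel-verified Lean document; each statement's English description precedes it below -/
import Mathlib

section
/- Let a ∈ ℝ with 0 < a < 1, λ ∈ ℂ with |λ| = 1, and let z1, z2, z3 be points on the unit circle satisfying the polynomial identity z(z²-a²) - λ(1-a²z²) = (z-z1)(z-z2)(z-z3). Then z̄1z2 + z1z̄2 + z̄2z3 + z2z̄3 + z̄1z3 + z1z̄3 = a⁴ - 3. -/
open Complex ComplexConjugate

/- The preimages of `λ` are the roots of `z³ + λa²z² - a²z - λ`, so by Vieta their sum has modulus
`a²`. The mixed terms are what remains of `|z₁ + z₂ + z₃|²` after removing `|z₁|² + |z₂|² + |z₃|² = 3`. -/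

theorem sum_roots_of_forall_cubic_eq {K : Type*} [Field K] [CharZero K] {b c d z₁ z₂ z₃ : K}
    (h : ∀ z : K, z ^ 3 + b * z ^ 2 + c * z + d = (z - z₁) * (z - z₂) * (z - z₃)) :
    z₁ + z₂ + z₃ = -b := by
  linear_combination (1 / 2 : K) * h 1 + (1 / 2 : K) * h (-1) - h 0

theorem pairwise_conj_mul_add_eq_norm_sq_sub (z₁ z₂ z₃ : ℂ) :
    conj z₁ * z₂ + z₁ * conj z₂ + conj z₂ * z₃ + z₂ * conj z₃ + conj z₁ * z₃ + z₁ * conj z₃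
      = ((‖z₁ + z₂ + z₃‖ ^ 2 - (‖z₁‖ ^ 2 + ‖z₂‖ ^ 2 + ‖z₃‖ ^ 2) : ℝ) : ℂ) := by
  push_cast
  simp only [← mul_conj', map_add]
  ring

theorem blaschke3_mixed_terms_invariant_general
    (a : ℝ)
    (lam : ℂ) (hlam : ‖lam‖ = 1)
    (z1 z2 z3 : ℂ)
    (h1 : ‖z1‖ = 1) (h2 : ‖z2‖ = 1) (h3 : ‖z3‖ = 1)
    (hid : ∀ z : ℂ, z * (z ^ 2 - (a : ℂ) ^ 2) - lam * (1 - (a : ℂ) ^ 2 * z ^ 2)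
      = (z - z1) * (z - z2) * (z - z3)) :
    (starRingEnd ℂ) z1 * z2 + z1 * (starRingEnd ℂ) z2
      + (starRingEnd ℂ) z2 * z3 + z2 * (starRingEnd ℂ) z3
      + (starRingEnd ℂ) z1 * z3 + z1 * (starRingEnd ℂ) z3
      = (a : ℂ) ^ 4 - 3 := by
  have hsum : z1 + z2 + z3 = -(lam * (a : ℂ) ^ 2) :=
    sum_roots_of_forall_cubic_eq (c := -(a : ℂ) ^ 2) (d := -lam) fun z => by
      linear_combination hid z
  have hnorm : ‖z1 + z2 + z3‖ = a ^ 2 := by simp [hsum, hlam]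
  rw [pairwise_conj_mul_add_eq_norm_sq_sub, hnorm, h1, h2, h3]
  push_cast
  ring

/-- key invariance identity in the proof of Reznik's conjecture:
`z̄1 z2 + z1 z̄2 + z̄2 z3 + z2 z̄3 + z̄1 z3 + z1 z̄3 = a⁴ - 3`. -/
theorem blaschke3_mixed_terms_invariant
    (a : ℝ) (ha0 : 0 < a) (ha1 : a < 1)
    (lam : ℂ) (hlam : ‖lam‖ = 1)
    (z1 z2 z3 : ℂ)
    (h1 : ‖z1‖ = 1) (h2 : ‖z2‖ = 1) (h3 : ‖z3‖ = 1)
    (hid : ∀ z : ℂ, z * (z ^ 2 - (a : ℂ) ^ 2) - lam * (1 - (a : ℂ) ^ 2 * z ^ 2)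
      = (z - z1) * (z - z2) * (z - z3)) :
    (starRingEnd ℂ) z1 * z2 + z1 * (starRingEnd ℂ) z2
      + (starRingEnd ℂ) z2 * z3 + z2 * (starRingEnd ℂ) z3
      + (starRingEnd ℂ) z1 * z3 + z1 * (starRingEnd ℂ) z3
      = (a : ℂ) ^ 4 - 3 :=
  blaschke3_mixed_terms_invariant_general a lam hlam z1 z2 z3 h1 h2 h3 hid
end

section
/- Let a ∈ ℝ with 0 < a < 1, λ ∈ ℂ with |λ| = 1, and let z1, z2, z3 be points on the unit circle with z(z²-a²) - λ(1-a²z²) = (z-z1)(z-z2)(z-z3). Let rj be the distance from zj to the midpoint of the opposite side of the triangle z1z2z3. Then r1² + r2² + r3² = 9/2 - (3/4)(a⁴ - 3), a constant independent of λ. (Reznik's conjecture for Poncelet triangles.) -/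
/-!
By Vieta, `z₁ + z₂ + z₃ = -λa²`, which has modulus `a²`. Since `zⱼ - (zₖ + zₗ)/2 = (3zⱼ - s)/2`
with `s = z₁ + z₂ + z₃`, expanding the squares gives
`Σ rⱼ² = (9/4) Σ ‖zⱼ‖² - (3/4) ‖s‖²`, so on the unit circle `Σ rⱼ² = 27/4 - (3/4) a⁴`.
-/

open Complex

theorem add_add_eq_neg_of_cubic_eq {K : Type*} [Field K] [CharZero K] {b c d z₁ z₂ z₃ : K}
    (h : ∀ z, z ^ 3 + b * z ^ 2 + c * z + d = (z - z₁) * (z - z₂) * (z - z₃)) :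
    z₁ + z₂ + z₃ = -b := by
  linear_combination (1 / 2 : K) * h 1 + (1 / 2 : K) * h (-1) - h 0

theorem sum_norm_sub_midpoint_sq {E : Type*} [NormedAddCommGroup E] [InnerProductSpace ℝ E]
    (z₁ z₂ z₃ : E) :
    ‖z₁ - (1 / 2 : ℝ) • (z₂ + z₃)‖ ^ 2 + ‖z₂ - (1 / 2 : ℝ) • (z₁ + z₃)‖ ^ 2
        + ‖z₃ - (1 / 2 : ℝ) • (z₁ + z₂)‖ ^ 2
      = 9 / 4 * (‖z₁‖ ^ 2 + ‖z₂‖ ^ 2 + ‖z₃‖ ^ 2) - 3 / 4 * ‖z₁ + z₂ + z₃‖ ^ 2 := by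
  simp only [← real_inner_self_eq_norm_sq, inner_sub_left, inner_sub_right, inner_add_left,
    inner_add_right, real_inner_smul_left, real_inner_smul_right, real_inner_comm z₁ z₂,
    real_inner_comm z₁ z₃, real_inner_comm z₂ z₃]
  ring

theorem reznik_conjecture_poncelet_triangles_general
    (a : ℝ)
    (lam : ℂ) (hlam : ‖lam‖ = 1)
    (z1 z2 z3 : ℂ)
    (h1 : ‖z1‖ = 1) (h2 : ‖z2‖ = 1) (h3 : ‖z3‖ = 1)
    (hid : ∀ z : ℂ, z * (z ^ 2 - (a : ℂ) ^ 2) - lam * (1 - (a : ℂ) ^ 2 * z ^ 2)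
      = (z - z1) * (z - z2) * (z - z3))
    (r1 r2 r3 : ℝ)
    (hr1 : r1 = ‖z1 - (z2 + z3) / 2‖)
    (hr2 : r2 = ‖z2 - (z1 + z3) / 2‖)
    (hr3 : r3 = ‖z3 - (z1 + z2) / 2‖) :
    r1 ^ 2 + r2 ^ 2 + r3 ^ 2 = 9 / 2 - (3 / 4) * (a ^ 4 - 3) := by
  have hsum : z1 + z2 + z3 = -(lam * (a : ℂ) ^ 2) :=
    add_add_eq_neg_of_cubic_eq (c := -(a : ℂ) ^ 2) (d := -lam) fun z => by
      linear_combination hid z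
  have hnorm : ‖z1 + z2 + z3‖ = a ^ 2 := by
    rw [hsum, norm_neg, norm_mul, hlam, norm_pow, norm_real, Real.norm_eq_abs, sq_abs, one_mul]
  have hmid : ∀ w u v : ℂ, w - (u + v) / 2 = w - (1 / 2 : ℝ) • (u + v) := fun w u v => by
    rw [Complex.real_smul]; push_cast; ring
  rw [hr1, hr2, hr3, hmid, hmid, hmid, sum_norm_sub_midpoint_sq, h1, h2, h3, hnorm]
  ring

/-- Reznik's conjecture for Poncelet triangles: with `r j` the distance from
vertex `z j` to the midpoint of the opposite side, `r1² + r2² + r3² = 9/2 - (3/4)(a⁴-3)`,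
a constant independent of `λ`. -/
theorem reznik_conjecture_poncelet_triangles
    (a : ℝ) (ha0 : 0 < a) (ha1 : a < 1)
    (lam : ℂ) (hlam : ‖lam‖ = 1)
    (z1 z2 z3 : ℂ)
    (h1 : ‖z1‖ = 1) (h2 : ‖z2‖ = 1) (h3 : ‖z3‖ = 1)
    (hid : ∀ z : ℂ, z * (z ^ 2 - (a : ℂ) ^ 2) - lam * (1 - (a : ℂ) ^ 2 * z ^ 2)
      = (z - z1) * (z - z2) * (z - z3))
    (r1 r2 r3 : ℝ)
    (hr1 : r1 = ‖z1 - (z2 + z3) / 2‖)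
    (hr2 : r2 = ‖z2 - (z1 + z3) / 2‖)
    (hr3 : r3 = ‖z3 - (z1 + z2) / 2‖) :
    r1 ^ 2 + r2 ^ 2 + r3 ^ 2 = 9 / 2 - (3 / 4) * (a ^ 4 - 3) :=
  reznik_conjecture_poncelet_triangles_general a lam hlam z1 z2 z3 h1 h2 h3 hid r1 r2 r3 hr1 hr2 hr3
end

section
/- Let a ∈ ℝ with 0 < a < 1, λ ∈ ℂ with |λ| = 1, and z1, z2, z3 on the unit circle satisfying z(z²-a²) - λ(1-a²z²) = (z-z1)(z-z2)(z-z3). Then (z1+z̄1)(z2+z̄2) + (z1+z̄1)(z3+z̄3) + (z2+z̄2)(z3+z̄3) = -3 + a⁴ - 2a². -/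
open Complex

/-!
On the unit circle `conj z = z⁻¹`, so each factor `zᵢ + z̄ᵢ` is `zᵢ + zᵢ⁻¹`, and the sum of the pairwise
products is a symmetric rational function of `z1, z2, z3`. It is therefore determined by the elementary
symmetric functions, which Vieta's formulas read off the cubic `z³ + λa²z² - a²z - λ`:
`e₁ = -λa²`, `e₂ = -a²`, `e₃ = λ`. The factor `λ` cancels from `e₁ / e₃` and `e₁ e₂ / e₃`.
-/

theorem vieta_cubic {K : Type*} [Field K] [NeZero (2 : K)] {p q r x₁ x₂ x₃ : K}
    (h : ∀ z : K, z ^ 3 + p * z ^ 2 + q * z + r = (z - x₁) * (z - x₂) * (z - x₃)) :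
    x₁ + x₂ + x₃ = -p ∧ x₁ * x₂ + x₁ * x₃ + x₂ * x₃ = q ∧ x₁ * x₂ * x₃ = -r := by
  have h₂ : (2 : K) ≠ 0 := two_ne_zero
  have hsum : 2 * (x₁ + x₂ + x₃) = 2 * -p := by linear_combination h 1 + h (-1) - 2 * h 0
  have hpair : 2 * (x₁ * x₂ + x₁ * x₃ + x₂ * x₃) = 2 * q := by
    linear_combination h (-1) - h 1
  exact ⟨mul_left_cancel₀ h₂ hsum, mul_left_cancel₀ h₂ hpair, by linear_combination h 0⟩

theorem sum_pairwise_mul_add_inv {K : Type*} [Field K] {x₁ x₂ x₃ : K}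
    (h₁ : x₁ ≠ 0) (h₂ : x₂ ≠ 0) (h₃ : x₃ ≠ 0) :
    (x₁ + x₁⁻¹) * (x₂ + x₂⁻¹) + (x₁ + x₁⁻¹) * (x₃ + x₃⁻¹) + (x₂ + x₂⁻¹) * (x₃ + x₃⁻¹)
      = (x₁ * x₂ + x₁ * x₃ + x₂ * x₃) + (x₁ + x₂ + x₃) / (x₁ * x₂ * x₃)
        + (x₁ + x₂ + x₃) * (x₁ * x₂ + x₁ * x₃ + x₂ * x₃) / (x₁ * x₂ * x₃) - 3 := by
  field_simp
  ring

theorem blaschke3_real_parts_product_identity_general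
    (a : ℝ)
    (lam : ℂ)
    (z1 z2 z3 : ℂ)
    (h1 : ‖z1‖ = 1) (h2 : ‖z2‖ = 1) (h3 : ‖z3‖ = 1)
    (hid : ∀ z : ℂ, z * (z ^ 2 - (a : ℂ) ^ 2) - lam * (1 - (a : ℂ) ^ 2 * z ^ 2)
      = (z - z1) * (z - z2) * (z - z3)) :
    (z1 + (starRingEnd ℂ) z1) * (z2 + (starRingEnd ℂ) z2)
      + (z1 + (starRingEnd ℂ) z1) * (z3 + (starRingEnd ℂ) z3)
      + (z2 + (starRingEnd ℂ) z2) * (z3 + (starRingEnd ℂ) z3)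
      = -3 + (a : ℂ) ^ 4 - 2 * (a : ℂ) ^ 2 := by
  have hz : ∀ {z : ℂ}, ‖z‖ = 1 → z ≠ 0 := fun h => norm_ne_zero_iff.mp (h ▸ one_ne_zero)
  obtain ⟨hsum, hpair, hprod⟩ := vieta_cubic (p := lam * (a : ℂ) ^ 2) (q := -(a : ℂ) ^ 2)
    (r := -lam) fun z => by rw [← hid z]; ring
  have hlam_ne : lam ≠ 0 := by
    rw [neg_neg] at hprod
    exact hprod ▸ mul_ne_zero (mul_ne_zero (hz h1) (hz h2)) (hz h3)
  rw [← inv_eq_conj h1, ← inv_eq_conj h2, ← inv_eq_conj h3,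
    sum_pairwise_mul_add_inv (hz h1) (hz h2) (hz h3), hsum, hpair, hprod]
  field_simp
  ring

/-- combining the modulus equations at the two foci yields
`(z1+z̄1)(z2+z̄2) + (z1+z̄1)(z3+z̄3) + (z2+z̄2)(z3+z̄3) = -3 + a⁴ - 2a²`. -/
theorem blaschke3_real_parts_product_identity
    (a : ℝ) (ha0 : 0 < a) (ha1 : a < 1)
    (lam : ℂ) (hlam : ‖lam‖ = 1)
    (z1 z2 z3 : ℂ)
    (h1 : ‖z1‖ = 1) (h2 : ‖z2‖ = 1) (h3 : ‖z3‖ = 1)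
    (hid : ∀ z : ℂ, z * (z ^ 2 - (a : ℂ) ^ 2) - lam * (1 - (a : ℂ) ^ 2 * z ^ 2)
      = (z - z1) * (z - z2) * (z - z3)) :
    (z1 + (starRingEnd ℂ) z1) * (z2 + (starRingEnd ℂ) z2)
      + (z1 + (starRingEnd ℂ) z1) * (z3 + (starRingEnd ℂ) z3)
      + (z2 + (starRingEnd ℂ) z2) * (z3 + (starRingEnd ℂ) z3)
      = -3 + (a : ℂ) ^ 4 - 2 * (a : ℂ) ^ 2 :=
  blaschke3_real_parts_product_identity_general a lam z1 z2 z3 h1 h2 h3 hid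
end
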